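/- arXiv:1908.09819 — 3 statements merged into one kernel-verified Lean document; each statement's English description precedes it below -/
import Mathlib

section
/- Let G be a finite group, H ≤ G, and ρ an irreducible complex representation of H. Suppose that for every g ∈ G with g ∉ H, the space of intertwiners Hom_{H ∩ gHg⁻¹}(ρ^g, ρ) is zero, where ρ^g(x) = ρ(g⁻¹ x g). Then the induced representation Ind_H^G ρ is irreducible. -/
/-!
Let `W ⊆ Ind ρ` be a nonzero `G`-stable subspace. By Maschke's theorem `W` has a `G`-stable
complement, so the projection `P` onto `W` commutes with `G` and preserves `Ind ρ`. Composing `P`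
with the canonical embedding `V → Ind ρ` gives an `H`-map `Φ : V → Ind ρ`. For `x ∉ H`, evaluation
of `Φ` at `x` intertwines `ρ^x` with `ρ` on `H ∩ xHx⁻¹`, so it vanishes by Mackey's condition;
evaluation at `1` commutes with `ρ`, so it is a scalar `c` by Schur's lemma. Hence `Φ` is `c` times
the embedding, and since the `G`-translates of the embedded copy of `V` span `Ind ρ`, `P = c` on
`Ind ρ`. As `P` is the identity on `W ≠ 0`, `c = 1` and `W = Ind ρ`.
-/

/-- The space of the representation of `G` induced from `(ρ, V)` on `H ≤ G`, realized as
functions `f : G → V` with `f(hx) = ρ(h) f(x)`, on which `G` acts by right translation. -/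
def indSpace {G : Type*} [Group G] (H : Subgroup G) {V : Type*} [AddCommGroup V]
    [Module ℂ V] (ρ : Representation ℂ H V) : Submodule ℂ (G → V) where
  carrier := {f | ∀ (h : H) (x : G), f ((h : G) * x) = ρ h (f x)}
  add_mem' := by
    intro a b ha hb h x
    simp only [Pi.add_apply, ha h x, hb h x, map_add]
  zero_mem' := by intro h x; simp
  smul_mem' := by
    intro c a ha h x
    simp only [Pi.smul_apply, ha h x, map_smul]

namespace Representation

variable {k G V : Type*} [Field k] [AddCommGroup V] [Module k V]

theorem isIrreducible_of_forall_eq_bot_or_eq_top [Monoid G] [Nontrivial V]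
    (ρ : Representation k G V)
    (h : ∀ U : Submodule k V, (∀ g : G, ∀ v ∈ U, ρ g v ∈ U) → U = ⊥ ∨ U = ⊤) :
    ρ.IsIrreducible where
  exists_pair_ne := ⟨⊥, ⊤, fun hbt => bot_ne_top (congrArg Subrepresentation.toSubmodule hbt)⟩
  eq_bot_or_eq_top U :=
    (h U.toSubmodule fun g _ hv => U.apply_mem_toSubmodule g hv).imp
      (fun hU => Subrepresentation.toSubmodule_injective hU)
      (fun hU => Subrepresentation.toSubmodule_injective hU)

theorem exists_eq_smul_id_of_comp_eq_comp [Monoid G] [IsAlgClosed k] [FiniteDimensional k V]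
    (ρ : Representation k G V) [ρ.IsIrreducible] (T : V →ₗ[k] V)
    (hT : ∀ g, T ∘ₗ ρ g = ρ g ∘ₗ T) : ∃ c : k, T = c • LinearMap.id := by
  obtain ⟨c, hc⟩ := IsIrreducible.algebraMap_intertwiningMap_bijective_of_isAlgClosed.2
    (⟨T, hT⟩ : IntertwiningMap ρ ρ)
  exact ⟨c, (congrArg IntertwiningMap.toLinearMap hc).symm⟩

theorem exists_commute_projection [Group G] [Finite G] [NeZero (Nat.card G : k)]
    (σ : Representation k G V) (W : Submodule k V) (hW : ∀ g, ∀ v ∈ W, σ g v ∈ W) :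
    ∃ P : Module.End k V, (∀ g, Commute P (σ g)) ∧ LinearMap.range P = W ∧ ∀ w ∈ W, P w = w := by
  obtain ⟨W', hW'⟩ := exists_isCompl (⟨W, hW⟩ : Subrepresentation σ)
  have hcompl : IsCompl W W'.toSubmodule :=
    ⟨disjoint_iff.2 (congrArg Subrepresentation.toSubmodule (disjoint_iff.1 hW'.disjoint)),
      codisjoint_iff.2 (congrArg Subrepresentation.toSubmodule (codisjoint_iff.1 hW'.codisjoint))⟩
  refine ⟨W.projection W'.toSubmodule hcompl, fun g => ?_, Submodule.range_projection hcompl,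
    fun w hw => Submodule.projection_apply_of_mem_left hcompl hw⟩
  rw [LinearMap.IsIdempotentElem.commute_iff (Submodule.isIdempotentElem_projection hcompl),
    Submodule.range_projection, Submodule.ker_projection, Module.End.mem_invtSubmodule,
    Module.End.mem_invtSubmodule]
  exact ⟨fun v hv => hW g v hv, fun v hv => W'.apply_mem_toSubmodule g hv⟩

end Representation

def rightTranslation (k G V : Type*) [CommSemiring k] [Monoid G] [AddCommMonoid V] [Module k V] :
    Representation k G (G → V) where
  toFun g := LinearMap.funLeft k V (· * g)
  map_one' := by ext; simp
  map_mul' g h := by ext; simp [mul_assoc]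

@[simp]
theorem rightTranslation_apply {k G V : Type*} [CommSemiring k] [Monoid G] [AddCommMonoid V]
    [Module k V] (g : G) (f : G → V) (x : G) : rightTranslation k G V g f x = f (x * g) :=
  rfl

def MackeyCondition {k G V : Type*} [CommSemiring k] [Group G] {H : Subgroup G} [AddCommMonoid V]
    [Module k V] (ρ : Representation k H V) : Prop :=
  ∀ g : G, g ∉ H → ∀ T : V →ₗ[k] V,
    (∀ x : G, (hx : x ∈ H) → (hgx : g⁻¹ * x * g ∈ H) →
      T ∘ₗ (ρ ⟨g⁻¹ * x * g, hgx⟩ : V →ₗ[k] V) = (ρ ⟨x, hx⟩ : V →ₗ[k] V) ∘ₗ T) →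
    T = 0

section Induced

variable {G : Type*} [Group G] {H : Subgroup G} {V : Type*} [AddCommGroup V] [Module ℂ V]
  (ρ : Representation ℂ H V)

open Classical in
/-- The canonical `H`-embedding `V → Ind_H^G V` of Frobenius reciprocity. -/
noncomputable def indSingle : V →ₗ[ℂ] (G → V) where
  toFun v x := if hx : x ∈ H then ρ ⟨x, hx⟩ v else 0
  map_add' v w := by ext x; by_cases hx : x ∈ H <;> simp [hx]
  map_smul' c v := by ext x; by_cases hx : x ∈ H <;> simp [hx]

theorem indSingle_apply_of_mem (v : V) {x : G} (hx : x ∈ H) :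
    indSingle ρ v x = ρ ⟨x, hx⟩ v := dif_pos hx

theorem indSingle_apply_of_notMem (v : V) {x : G} (hx : x ∉ H) : indSingle ρ v x = 0 :=
  dif_neg hx

theorem indSingle_mem_indSpace (v : V) : indSingle ρ v ∈ indSpace H ρ := by
  intro h x
  by_cases hx : x ∈ H
  · rw [indSingle_apply_of_mem ρ v hx, indSingle_apply_of_mem ρ v (H.mul_mem h.2 hx),
      ← Module.End.mul_apply, ← map_mul]
    rfl
  · rw [indSingle_apply_of_notMem ρ v hx, map_zero,
      indSingle_apply_of_notMem ρ v fun hhx => hx (by simpa using H.mul_mem (H.inv_mem h.2) hhx)]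

theorem rightTranslation_indSingle (h : H) (v : V) :
    rightTranslation ℂ G V h (indSingle ρ v) = indSingle ρ (ρ h v) := by
  ext x
  rw [rightTranslation_apply]
  by_cases hx : x ∈ H
  · rw [indSingle_apply_of_mem ρ _ hx, indSingle_apply_of_mem ρ v (H.mul_mem hx h.2),
      ← Module.End.mul_apply, ← map_mul]
    rfl
  · rw [indSingle_apply_of_notMem ρ _ hx,
      indSingle_apply_of_notMem ρ v fun hxh => hx (by simpa using H.mul_mem hxh (H.inv_mem h.2))]

theorem apply_eq_of_mem_indSpace {f : G → V} (hf : f ∈ indSpace H ρ) {x : G} (hx : x ∈ H) :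
    f x = ρ ⟨x, hx⟩ (f 1) := by
  simpa using hf ⟨x, hx⟩ 1

open Classical in
theorem indSingle_apply_inv_mul {f : G → V} (hf : f ∈ indSpace H ρ) (k x : G) :
    indSingle ρ (f (k⁻¹ * x)) k = if k ∈ H then f x else 0 := by
  by_cases hk : k ∈ H
  · rw [if_pos hk, indSingle_apply_of_mem ρ _ hk, hf ⟨k⁻¹, H.inv_mem hk⟩ x,
      ← Module.End.mul_apply, ← map_mul,
      show (⟨k, hk⟩ * ⟨k⁻¹, H.inv_mem hk⟩ : H) = 1 from Subtype.ext (mul_inv_cancel k),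
      map_one, Module.End.one_apply]
  · rw [if_neg hk, indSingle_apply_of_notMem ρ _ hk]

theorem card_smul_eq_sum_rightTranslation_indSingle [Fintype G] {f : G → V}
    (hf : f ∈ indSpace H ρ) :
    (Nat.card H : ℂ) • f = ∑ g : G, rightTranslation ℂ G V g (indSingle ρ (f g⁻¹)) := by
  classical
  ext x
  calc (Nat.card H : ℂ) • f x = ∑ k : G, if k ∈ H then f x else 0 := by
        simp [Finset.sum_ite, Nat.card_eq_fintype_card, Fintype.card_subtype,
          Nat.cast_smul_eq_nsmul]
    _ = ∑ k : G, indSingle ρ (f (k⁻¹ * x)) k :=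
        Finset.sum_congr rfl fun k _ => (indSingle_apply_inv_mul ρ hf k x).symm
    _ = ∑ g : G, indSingle ρ (f g⁻¹) (x * g) :=
        Fintype.sum_equiv (Equiv.mulLeft x⁻¹) _ _ fun k => by simp
    _ = _ := by simp [Finset.sum_apply]

end Induced

section Mackey

variable {G : Type*} [Group G] {H : Subgroup G} {V : Type*} [AddCommGroup V] [Module ℂ V]
  {ρ : Representation ℂ H V}

theorem proj_one_comp_comm_of_mem_indSpace {Φ : V →ₗ[ℂ] (G → V)}
    (hΦ : ∀ v, Φ v ∈ indSpace H ρ)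
    (hΦH : ∀ (h : H) (v : V), Φ (ρ h v) = rightTranslation ℂ G V h (Φ v)) (h : H) :
    (LinearMap.proj 1 ∘ₗ Φ) ∘ₗ ρ h = ρ h ∘ₗ (LinearMap.proj 1 ∘ₗ Φ) := by
  ext v
  simp only [LinearMap.comp_apply, LinearMap.proj_apply, hΦH, rightTranslation_apply, one_mul]
  exact apply_eq_of_mem_indSpace ρ (hΦ v) h.2

theorem proj_comp_comm_conj_of_mem_indSpace {Φ : V →ₗ[ℂ] (G → V)}
    (hΦ : ∀ v, Φ v ∈ indSpace H ρ)
    (hΦH : ∀ (h : H) (v : V), Φ (ρ h v) = rightTranslation ℂ G V h (Φ v))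
    (g y : G) (hy : y ∈ H) (hgy : g⁻¹ * y * g ∈ H) :
    (LinearMap.proj g ∘ₗ Φ) ∘ₗ ρ ⟨g⁻¹ * y * g, hgy⟩ = ρ ⟨y, hy⟩ ∘ₗ (LinearMap.proj g ∘ₗ Φ) := by
  ext v
  simp only [LinearMap.comp_apply, LinearMap.proj_apply, hΦH, rightTranslation_apply]
  rw [show g * (g⁻¹ * y * g) = y * g by group]
  exact hΦ v ⟨y, hy⟩ g

theorem eq_indSingle_comp_of_mackeyCondition (hmackey : MackeyCondition ρ)
    {Φ : V →ₗ[ℂ] (G → V)} (hΦ : ∀ v, Φ v ∈ indSpace H ρ)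
    (hΦH : ∀ (h : H) (v : V), Φ (ρ h v) = rightTranslation ℂ G V h (Φ v)) :
    Φ = indSingle ρ ∘ₗ (LinearMap.proj 1 ∘ₗ Φ) := by
  ext v x
  by_cases hx : x ∈ H
  · rw [LinearMap.comp_apply, indSingle_apply_of_mem ρ _ hx]
    exact apply_eq_of_mem_indSpace ρ (hΦ v) hx
  · have hzero := hmackey x hx _ (proj_comp_comm_conj_of_mem_indSpace hΦ hΦH x)
    rw [LinearMap.comp_apply, indSingle_apply_of_notMem ρ _ hx]
    exact LinearMap.congr_fun hzero v

theorem exists_eq_smul_on_indSpace [Fintype G] [FiniteDimensional ℂ V] [ρ.IsIrreducible]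
    (hmackey : MackeyCondition ρ) (P : Module.End ℂ (G → V))
    (hPσ : ∀ g, Commute P (rightTranslation ℂ G V g))
    (hP : ∀ f ∈ indSpace H ρ, P f ∈ indSpace H ρ) :
    ∃ c : ℂ, ∀ f ∈ indSpace H ρ, P f = c • f := by
  set Φ := P ∘ₗ indSingle ρ
  have hΦ : ∀ v, Φ v ∈ indSpace H ρ := fun v => hP _ (indSingle_mem_indSpace ρ v)
  have hΦH : ∀ (h : H) (v : V), Φ (ρ h v) = rightTranslation ℂ G V h (Φ v) := fun h v => by
    simp only [Φ, LinearMap.comp_apply, ← rightTranslation_indSingle]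
    exact LinearMap.congr_fun (hPσ h).eq _
  obtain ⟨c, hc⟩ := Representation.exists_eq_smul_id_of_comp_eq_comp ρ _
    (proj_one_comp_comm_of_mem_indSpace hΦ hΦH)
  have hΦc : ∀ v, Φ v = c • indSingle ρ v := fun v => by
    rw [eq_indSingle_comp_of_mackeyCondition hmackey hΦ hΦH, LinearMap.comp_apply, hc]
    simp
  refine ⟨c, fun f hf => smul_right_injective _ (NeZero.ne (Nat.card H : ℂ)) ?_⟩
  calc (Nat.card H : ℂ) • P f
      = ∑ g : G, P (rightTranslation ℂ G V g (indSingle ρ (f g⁻¹))) := by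
        rw [← map_smul, card_smul_eq_sum_rightTranslation_indSingle ρ hf, map_sum]
    _ = ∑ g : G, rightTranslation ℂ G V g (c • indSingle ρ (f g⁻¹)) := by
        refine Finset.sum_congr rfl fun g _ => ?_
        rw [← hΦc]
        exact LinearMap.congr_fun (hPσ g).eq _
    _ = (Nat.card H : ℂ) • c • f := by
        simp only [map_smul, ← Finset.smul_sum, ← card_smul_eq_sum_rightTranslation_indSingle ρ hf,
          smul_comm c]

end Mackey

/-- Mackey irreducibility criterion: let `G` be a finite group, `H ≤ G`,
and `ρ` an irreducible complex representation of `H`. If for every `g ∈ G` with `g ∉ H`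
the space of intertwiners `Hom_{H ∩ gHg⁻¹}(ρ^g, ρ)` is zero, then `Ind_H^G ρ` is
irreducible. -/
theorem mackey_irreducibility
    (G : Type*) [Group G] [Fintype G] (H : Subgroup G)
    (V : Type*) [AddCommGroup V] [Module ℂ V] [FiniteDimensional ℂ V] [Nontrivial V]
    (ρ : Representation ℂ H V)
    -- `ρ` is irreducible:
    (hirr : ∀ U : Submodule ℂ V, (∀ (h : H), ∀ v ∈ U, ρ h v ∈ U) → U = ⊥ ∨ U = ⊤)
    -- for `g ∉ H`, every `H ∩ gHg⁻¹`-intertwiner from `ρ^g` to `ρ` is zero: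
    (hint : ∀ g : G, g ∉ H → ∀ T : V →ₗ[ℂ] V,
      (∀ x : G, (hx : x ∈ H) → (hgx : g⁻¹ * x * g ∈ H) →
        T ∘ₗ (ρ ⟨g⁻¹ * x * g, hgx⟩ : V →ₗ[ℂ] V) = (ρ ⟨x, hx⟩ : V →ₗ[ℂ] V) ∘ₗ T) →
      T = 0) :
    -- every `G`-stable subspace of `Ind_H^G ρ` is `⊥` or all of it:
    ∀ W : Submodule ℂ (G → V), W ≤ indSpace H ρ →
      (∀ g : G, ∀ f ∈ W, (fun x => f (x * g)) ∈ W) →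
      W = ⊥ ∨ W = indSpace H ρ := by
  intro W hWle hWstab
  have := ρ.isIrreducible_of_forall_eq_bot_or_eq_top hirr
  obtain ⟨P, hPσ, hPrange, hPW⟩ :=
    (rightTranslation ℂ G V).exists_commute_projection W hWstab
  have hPmem : ∀ f, P f ∈ W := fun f => hPrange ▸ LinearMap.mem_range_self P f
  obtain ⟨c, hc⟩ := exists_eq_smul_on_indSpace hint P hPσ fun f _ => hWle (hPmem f)
  rcases eq_or_ne W ⊥ with hbot | hbot
  · exact Or.inl hbot
  obtain ⟨f₀, hf₀W, hf₀⟩ := Submodule.exists_mem_ne_zero_of_ne_bot hbot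
  have hc1 : c = 1 := smul_left_injective ℂ hf₀ <| by
    simp only [← hc f₀ (hWle hf₀W), hPW f₀ hf₀W, one_smul]
  refine Or.inr (le_antisymm hWle fun f hf => ?_)
  simpa [hc f hf, hc1] using hPmem f
end

section
/- Let p be an odd prime, (V,⟨·,·⟩) a nondegenerate symplectic 𝔽_p-vector space of dimension 2n, and V^♯ = V × 𝔽_p the associated Heisenberg group. Every irreducible complex representation of V^♯ whose restriction to the center {0} × 𝔽_p is given by a nontrivial character has dimension pⁿ, and two such irreducible representations with the same central character are isomorphic. -/
/-- The Heisenberg multiplication on `V × 𝔽_p`: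
`(v,a)·(v',a') = (v+v', a+a'+(1/2)⟨v,v'⟩)`. -/
def heisMul {p : ℕ} {V : Type*} [AddCommGroup V] [Module (ZMod p) V]
    (f : V →ₗ[ZMod p] V →ₗ[ZMod p] ZMod p) (x y : V × ZMod p) : V × ZMod p :=
  (x.1 + y.1, x.2 + y.2 + (2 : ZMod p)⁻¹ * f x.1 y.1)

/-! Fix a Lagrangian `L` for `f` and a complement `M`. The operators `ρ (v, 0)` commute up to the
scalars `ψ (f u v)`, so for `v ≠ 0` the trace of `ρ (v, 0)` equals a nontrivial multiple of itself
and vanishes. Hence the average of `ρ (ℓ, 0)` over `ℓ ∈ L` has trace `dim W ≠ 0`, and there is a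
nonzero `L`-fixed vector `w`. The vectors `ρ (m, 0) w`, `m ∈ M`, are eigenvectors of the commuting
family `ρ (L, 0)` for the pairwise distinct characters `ℓ ↦ ψ (f ℓ m)`, hence independent, and
they span a `ρ`-invariant subspace, hence `W`. In this basis every `ρ x` is a monomial matrix whose
entries depend only on `f`, `ψ`, `L` and `M`: this gives `dim W = |M| = pⁿ` and the isomorphism. -/

open Module Submodule

section Lagrangian

variable {R K V : Type*}

theorem LinearMap.IsAlt.exists_orthogonalBilin_eq_self [CommRing R] [AddCommGroup V]
    [Module R V] [IsNoetherian R V] {f : V →ₗ[R] V →ₗ[R] R} (hf : f.IsAlt) :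
    ∃ L : Submodule R V, L.orthogonalBilin f = L := by
  obtain ⟨L, -, hLiso, hLmax⟩ := exists_maximal_ge_of_wellFoundedGT
    (fun L : Submodule R V => L ≤ L.orthogonalBilin f) ⊥ (by simp)
  refine ⟨L, le_antisymm (fun v hv => ?_) hLiso⟩
  have hiso : L ⊔ R ∙ v ≤ (L ⊔ R ∙ v).orthogonalBilin f := by
    rintro x hx y hy
    obtain ⟨a, ha, _, hc, rfl⟩ := mem_sup.1 hx
    obtain ⟨b, hb, _, hd, rfl⟩ := mem_sup.1 hy
    obtain ⟨c, rfl⟩ := mem_span_singleton.1 hc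
    obtain ⟨d, rfl⟩ := mem_span_singleton.1 hd
    have hbv : f b v = 0 := hv b hb
    have hva : f v a = 0 := hf.eq_iff.1 (hv a ha)
    simp [hLiso ha b hb, hbv, hva, hf v]
  exact hLmax hiso le_sup_left (mem_sup_right (mem_span_singleton_self v))

theorem LinearMap.Nondegenerate.two_mul_finrank_eq_of_orthogonalBilin_eq_self [Field K]
    [AddCommGroup V] [Module K V] [FiniteDimensional K V] {f : V →ₗ[K] V →ₗ[K] K}
    (hf : f.Nondegenerate) {L : Submodule K V} (hL : L.orthogonalBilin f = L) :
    2 * finrank K L = finrank K V := by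
  have h := LinearMap.BilinForm.finrank_orthogonal hf L
  rw [LinearMap.BilinForm.orthogonal, hL] at h
  have := L.finrank_le
  omega

end Lagrangian

theorem Module.End.linearIndependent_of_apply_eq_smul {ι κ k W : Type*} [Field k]
    [AddCommGroup W] [Module k W] {T : ι → Module.End k W} (hT : ∀ i j, Commute (T i) (T j))
    {e : κ → W} {χ : κ → ι → k} (hχ : Function.Injective χ)
    (he : ∀ a i, T i (e a) = χ a i • e a) (he0 : ∀ a, e a ≠ 0) : LinearIndependent k e := by
  refine iSupIndep.linearIndependent _
    ((independent_iInf_maxGenEigenspace_of_forall_mapsTo T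
      fun i j μ => mapsTo_maxGenEigenspace_of_comm (hT j i) μ).comp hχ) (fun a => ?_) he0
  simp only [Function.comp_apply, mem_iInf]
  exact fun i => eigenspace_le_maxGenEigenspace (mem_eigenspace_iff.2 (he a i))

theorem Module.Basis.equiv_refl_map_eq_of_apply_eq_smul {ι R M M' : Type*} [Semiring R]
    [AddCommMonoid M] [Module R M] [AddCommMonoid M'] [Module R M'] (b : Basis ι R M)
    (b' : Basis ι R M') {A : M →ₗ[R] M} {A' : M' →ₗ[R] M'} {c : ι → R} {σ : ι → ι}
    (hA : ∀ i, A (b i) = c i • b (σ i)) (hA' : ∀ i, A' (b' i) = c i • b' (σ i)) (x : M) :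
    b.equiv b' (.refl ι) (A x) = A' (b.equiv b' (.refl ι) x) := by
  suffices (b.equiv b' (.refl ι)).toLinearMap ∘ₗ A = A' ∘ₗ b.equiv b' (.refl ι) from
    LinearMap.congr_fun this x
  refine b.ext fun i => ?_
  simp [hA, hA']

section HeisenbergRep

variable {p : ℕ} {V k W : Type*} [AddCommGroup V] [Module (ZMod p) V] [Field k]
  [AddCommGroup W] [Module k W] {f : V →ₗ[ZMod p] V →ₗ[ZMod p] ZMod p}
  {ψ : AddChar (ZMod p) k} {ρ : V × ZMod p → W →ₗ[k] W}

structure IsHeisenbergRep (f : V →ₗ[ZMod p] V →ₗ[ZMod p] ZMod p) (ψ : AddChar (ZMod p) k)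
    (ρ : V × ZMod p → W →ₗ[k] W) : Prop where
  map_heisMul : ∀ x y, ρ (heisMul f x y) = ρ x ∘ₗ ρ y
  map_center : ∀ a, ρ (0, a) = ψ a • LinearMap.id

theorem map_zero_eq_one_and_map_add_of_center [Nontrivial W] {ψ : ZMod p → k}
    (hone : ρ (0, 0) = LinearMap.id) (hmul : ∀ x y, ρ (heisMul f x y) = ρ x ∘ₗ ρ y)
    (hcent : ∀ a, ρ (0, a) = ψ a • LinearMap.id) : ψ 0 = 1 ∧ ∀ a b, ψ (a + b) = ψ a * ψ b := by
  obtain ⟨w, hw⟩ := exists_ne (0 : W)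
  have hscalar {c d : k} (h : c • (LinearMap.id : W →ₗ[k] W) = d • LinearMap.id) : c = d :=
    smul_left_injective k hw (LinearMap.congr_fun h w)
  refine ⟨hscalar (by rw [← hcent, hone, one_smul]), fun a b => hscalar ?_⟩
  have h := hmul (0, a) (0, b)
  simp only [heisMul, add_zero, map_zero, mul_zero, hcent] at h
  rw [h, LinearMap.smul_comp, LinearMap.comp_smul, LinearMap.id_comp, smul_smul]

variable (f) in
/-- `(v, c) = (π v, 0) · (v - π v, schrodingerPhase f hLM (v, c))`, where `π` projects onto `M`
along `L`. -/
noncomputable def schrodingerPhase {L M : Submodule (ZMod p) V} (hLM : IsCompl M L)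
    (y : V × ZMod p) : ZMod p :=
  y.2 - 2⁻¹ * f (M.projection L hLM y.1) (y.1 - M.projection L hLM y.1)

namespace IsHeisenbergRep

theorem map_add_center (hρ : IsHeisenbergRep f ψ ρ) (v : V) (a c : ZMod p) :
    ρ (v, a + c) = ψ c • ρ (v, a) := by
  have h := hρ.map_heisMul (0, c) (v, a)
  simp only [heisMul, zero_add, map_zero, LinearMap.zero_apply, mul_zero, add_zero] at h
  rw [add_comm, h, hρ.map_center, LinearMap.smul_comp, LinearMap.id_comp]

theorem map_zero_eq_id (hρ : IsHeisenbergRep f ψ ρ) : ρ (0, 0) = LinearMap.id := by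
  rw [hρ.map_center, AddChar.map_zero_eq_one, one_smul]

theorem neg_comp (hρ : IsHeisenbergRep f ψ ρ) (hf : f.IsAlt) (v : V) :
    ρ (-v, 0) ∘ₗ ρ (v, 0) = LinearMap.id := by
  rw [← hρ.map_heisMul, ← hρ.map_zero_eq_id]
  simp [heisMul, hf v]

theorem injective (hρ : IsHeisenbergRep f ψ ρ) (hf : f.IsAlt) (v : V) :
    Function.Injective (ρ (v, 0)) :=
  Function.LeftInverse.injective (g := ρ (-v, 0)) (LinearMap.congr_fun (hρ.neg_comp hf v))

theorem comp_eq_smul_comp (hρ : IsHeisenbergRep f ψ ρ) (hf : f.IsAlt) (h2 : IsUnit (2 : ZMod p))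
    (u v : V) : ρ (u, 0) ∘ₗ ρ (v, 0) = ψ (f u v) • (ρ (v, 0) ∘ₗ ρ (u, 0)) := by
  rw [← hρ.map_heisMul, ← hρ.map_heisMul, ← hρ.map_add_center]
  simp only [heisMul, zero_add, add_comm u v]
  congr 2
  rw [← hf.neg u v]
  linear_combination f u v * ZMod.mul_inv_of_unit 2 h2

theorem comp_of_apply_eq_zero (hρ : IsHeisenbergRep f ψ ρ) {u v : V} (huv : f u v = 0) :
    ρ (u, 0) ∘ₗ ρ (v, 0) = ρ (u + v, 0) := by
  rw [← hρ.map_heisMul]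
  simp [heisMul, huv]

theorem trace_eq_zero (hρ : IsHeisenbergRep f ψ ρ) (hf : f.IsAlt) (h2 : IsUnit (2 : ZMod p))
    (hψ : Function.Injective ψ) (hnd : f.SeparatingLeft) {v : V} (hv : v ≠ 0) :
    LinearMap.trace k W (ρ (v, 0)) = 0 := by
  obtain ⟨u, hu⟩ : ∃ u, f v u ≠ 0 := by
    by_contra! h
    exact hv (hnd v h)
  have hψu : ψ (f v u) ≠ 1 := fun h => hu (hψ (h.trans (AddChar.map_zero_eq_one ψ).symm))
  have hcomm := hρ.comp_eq_smul_comp hf h2 v u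
  have hinv : ρ (u, 0) ∘ₗ ρ (-u, 0) = LinearMap.id := by simpa using hρ.neg_comp hf (-u)
  have hconj : LinearMap.trace k W (ρ (v, 0)) = ψ (f v u) * LinearMap.trace k W (ρ (v, 0)) :=
    calc LinearMap.trace k W (ρ (v, 0))
        = LinearMap.trace k W ((ρ (v, 0) ∘ₗ ρ (u, 0)) ∘ₗ ρ (-u, 0)) := by
          rw [LinearMap.comp_assoc, hinv, LinearMap.comp_id]
      _ = ψ (f v u) * LinearMap.trace k W (ρ (u, 0) ∘ₗ (ρ (v, 0) ∘ₗ ρ (-u, 0))) := by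
          rw [hcomm, LinearMap.smul_comp, map_smul, smul_eq_mul, LinearMap.comp_assoc]
      _ = ψ (f v u) * LinearMap.trace k W (ρ (v, 0)) := by
          rw [← Module.End.mul_eq_comp, LinearMap.trace_mul_comm, Module.End.mul_eq_comp,
            LinearMap.comp_assoc, hρ.neg_comp hf, LinearMap.comp_id]
  have h := sub_eq_zero.2 hconj
  rw [← one_sub_mul] at h
  exact (mul_eq_zero.1 h).resolve_left (sub_ne_zero.2 hψu.symm)

theorem exists_ne_zero_forall_mem_apply_eq [Finite V] [FiniteDimensional k W] [Nontrivial W]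
    [CharZero k] (hρ : IsHeisenbergRep f ψ ρ) (hf : f.IsAlt) (h2 : IsUnit (2 : ZMod p))
    (hψ : Function.Injective ψ) (hnd : f.SeparatingLeft) {L : Submodule (ZMod p) V}
    (hL : L ≤ L.orthogonalBilin f) : ∃ w ≠ 0, ∀ ℓ ∈ L, ρ (ℓ, 0) w = w := by
  have := Fintype.ofFinite L
  set P := ∑ ℓ : L, ρ (ℓ, 0)
  have hfix (ℓ₀ : V) (hℓ₀ : ℓ₀ ∈ L) : ρ (ℓ₀, 0) * P = P := by
    rw [Finset.mul_sum]
    refine Fintype.sum_equiv (Equiv.addLeft ⟨ℓ₀, hℓ₀⟩) _ _ fun ℓ => ?_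
    exact hρ.comp_of_apply_eq_zero (hL ℓ.2 ℓ₀ hℓ₀)
  have htrace : LinearMap.trace k W P = finrank k W := by
    rw [map_sum, Finset.sum_eq_single 0 (fun ℓ _ hℓ => hρ.trace_eq_zero hf h2 hψ hnd
      (by simpa using hℓ)) (by simp)]
    simp [hρ.map_zero_eq_id]
  have hP : P ≠ 0 := by
    intro h
    rw [h, map_zero, eq_comm, Nat.cast_eq_zero] at htrace
    exact finrank_pos.ne' htrace
  obtain ⟨u, hu⟩ : ∃ u, P u ≠ 0 := by
    by_contra! h
    exact hP (LinearMap.ext h)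
  exact ⟨P u, hu, fun ℓ hℓ => LinearMap.congr_fun (hfix ℓ hℓ) u⟩

theorem map_add_apply_of_apply_eq (hρ : IsHeisenbergRep f ψ ρ) {ℓ : V} {w : W}
    (hw : ρ (ℓ, 0) w = w) (m : V) (c : ZMod p) :
    ρ (m + ℓ, c) w = ψ (c - 2⁻¹ * f m ℓ) • ρ (m, 0) w := by
  have h := hρ.map_heisMul (m, 0) (ℓ, c - 2⁻¹ * f m ℓ)
  simp only [heisMul, zero_add, sub_add_cancel] at h
  have hc := hρ.map_add_center ℓ 0 (c - 2⁻¹ * f m ℓ)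
  rw [zero_add] at hc
  rw [h, LinearMap.comp_apply, hc, LinearMap.smul_apply, hw, map_smul]

theorem apply_eq_smul_schrodingerPhase (hρ : IsHeisenbergRep f ψ ρ) {L M : Submodule (ZMod p) V}
    (hLM : IsCompl M L) {w : W} (hw : ∀ ℓ ∈ L, ρ (ℓ, 0) w = w) (y : V × ZMod p) :
    ρ y w = ψ (schrodingerPhase f hLM y) • ρ (M.projection L hLM y.1, 0) w := by
  obtain ⟨v, c⟩ := y
  have hv := hρ.map_add_apply_of_apply_eq (hw _ (sub_projection_mem hLM v))
    (M.projection L hLM v) c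
  rwa [add_sub_cancel] at hv

theorem linearIndependent_apply_of_forall_mem_apply_eq (hρ : IsHeisenbergRep f ψ ρ)
    (hf : f.IsAlt) (h2 : IsUnit (2 : ZMod p)) (hψ : Function.Injective ψ)
    {L M : Submodule (ZMod p) V} (hL : L.orthogonalBilin f = L) (hLM : Disjoint M L) {w : W}
    (hw0 : w ≠ 0) (hw : ∀ ℓ ∈ L, ρ (ℓ, 0) w = w) :
    LinearIndependent k fun m : M => ρ (m, 0) w := by
  refine Module.End.linearIndependent_of_apply_eq_smul (T := fun ℓ : L => ρ (ℓ, 0))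
    (χ := fun (m : M) (ℓ : L) => ψ (f ℓ m)) (fun ℓ ℓ' => ?_) (fun m m' hmm' => ?_)
    (fun m ℓ => ?_) (fun m => (map_ne_zero_iff _ (hρ.injective hf m)).2 hw0)
  · change ρ (ℓ, 0) ∘ₗ ρ (ℓ', 0) = ρ (ℓ', 0) ∘ₗ ρ (ℓ, 0)
    rw [hρ.comp_of_apply_eq_zero (hL.ge ℓ'.2 ℓ ℓ.2), hρ.comp_of_apply_eq_zero (hL.ge ℓ.2 ℓ' ℓ'.2),
      add_comm]
  · have hortho : (m - m' : V) ∈ L.orthogonalBilin f := fun ℓ hℓ => by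
      simpa [sub_eq_zero] using hψ (congr_fun hmm' ⟨ℓ, hℓ⟩)
    rw [hL] at hortho
    have h0 : (m - m' : V) ∈ M ⊓ L := mem_inf.2 ⟨sub_mem m.2 m'.2, hortho⟩
    rw [hLM.eq_bot, mem_bot, sub_eq_zero] at h0
    exact Subtype.ext h0
  · rw [← LinearMap.comp_apply, hρ.comp_eq_smul_comp hf h2, LinearMap.smul_apply,
      LinearMap.comp_apply, hw ℓ ℓ.2]

theorem span_range_apply_eq_top (hρ : IsHeisenbergRep f ψ ρ)
    (hirr : ∀ U : Submodule k W, (∀ x, ∀ w ∈ U, ρ x w ∈ U) → U = ⊥ ∨ U = ⊤)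
    {L M : Submodule (ZMod p) V} (hLM : IsCompl M L) {w : W}
    (hw0 : w ≠ 0) (hw : ∀ ℓ ∈ L, ρ (ℓ, 0) w = w) :
    span k (Set.range fun m : M => ρ (m, 0) w) = ⊤ := by
  refine (hirr _ fun x u hu => ?_).resolve_left fun h => hw0 ?_
  · refine span_induction (fun _ ⟨m, hm⟩ => ?_) (by simp)
      (fun _ _ _ _ h h' => by rw [map_add]; exact add_mem h h')
      (fun c _ _ => by rw [map_smul]; exact smul_mem _ c) hu
    rw [← hm, ← LinearMap.comp_apply, ← hρ.map_heisMul,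
      hρ.apply_eq_smul_schrodingerPhase hLM hw]
    exact smul_mem _ _ (subset_span ⟨M.projectionOnto L hLM _, rfl⟩)
  · have h0 : ρ ((0 : M), 0) w ∈ span k (Set.range fun m : M => ρ (m, 0) w) :=
      subset_span ⟨0, rfl⟩
    simpa [h, hρ.map_zero_eq_id] using h0

theorem exists_basis_apply_eq_smul_schrodingerPhase [Finite V] [FiniteDimensional k W]
    [Nontrivial W] [CharZero k] (hρ : IsHeisenbergRep f ψ ρ) (hf : f.IsAlt)
    (h2 : IsUnit (2 : ZMod p)) (hψ : Function.Injective ψ) (hnd : f.SeparatingLeft)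
    (hirr : ∀ U : Submodule k W, (∀ x, ∀ w ∈ U, ρ x w ∈ U) → U = ⊥ ∨ U = ⊤)
    {L M : Submodule (ZMod p) V} (hL : L.orthogonalBilin f = L) (hLM : IsCompl M L) :
    ∃ b : Basis M k W, ∀ x (m : M), ρ x (b m) =
      ψ (schrodingerPhase f hLM (heisMul f x (m, 0))) •
        b (M.projectionOnto L hLM (heisMul f x (m, 0)).1) := by
  obtain ⟨w, hw0, hw⟩ := hρ.exists_ne_zero_forall_mem_apply_eq hf h2 hψ hnd hL.ge
  refine ⟨Basis.mk (hρ.linearIndependent_apply_of_forall_mem_apply_eq hf h2 hψ hL hLM.disjoint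
    hw0 hw) (hρ.span_range_apply_eq_top hirr hLM hw0 hw).ge, fun x m => ?_⟩
  rw [Basis.mk_apply, Basis.mk_apply, ← LinearMap.comp_apply, ← hρ.map_heisMul]
  exact hρ.apply_eq_smul_schrodingerPhase hLM hw _

end IsHeisenbergRep

end HeisenbergRep

theorem stone_von_neumann_general (p : ℕ) [Fact p.Prime] (hodd : p ≠ 2) (n : ℕ)
    (V : Type*) [AddCommGroup V] [Module (ZMod p) V] [FiniteDimensional (ZMod p) V]
    (f : V →ₗ[ZMod p] V →ₗ[ZMod p] ZMod p)
    (halt : ∀ v : V, f v v = 0)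
    (hnd : ∀ v : V, v ≠ 0 → ∃ w : V, f v w ≠ 0)
    (hdim : Module.finrank (ZMod p) V = 2 * n)
    -- a representation `ρ` of `V^♯` on `W`:
    (W : Type*) [AddCommGroup W] [Module ℂ W] [FiniteDimensional ℂ W] [Nontrivial W]
    (ρ : V × ZMod p → (W →ₗ[ℂ] W))
    (hρone : ρ ((0 : V), (0 : ZMod p)) = LinearMap.id)
    (hρmul : ∀ x y : V × ZMod p, ρ (heisMul f x y) = ρ x ∘ₗ ρ y)
    -- `ρ` is irreducible:
    (hρirr : ∀ U : Submodule ℂ W, (∀ x : V × ZMod p, ∀ w ∈ U, ρ x w ∈ U) → U = ⊥ ∨ U = ⊤)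
    -- the center acts by a nontrivial character `ψ`:
    (ψ : ZMod p → ℂ)
    (hρcent : ∀ a : ZMod p, ρ ((0 : V), a) = ψ a • LinearMap.id)
    (hψnt : ∃ a : ZMod p, ψ a ≠ 1)
    -- a second representation `ρ'` of `V^♯` on `W'` with the same properties and the
    -- same central character `ψ`:
    (W' : Type*) [AddCommGroup W'] [Module ℂ W'] [FiniteDimensional ℂ W'] [Nontrivial W']
    (ρ' : V × ZMod p → (W' →ₗ[ℂ] W'))
    (hρ'mul : ∀ x y : V × ZMod p, ρ' (heisMul f x y) = ρ' x ∘ₗ ρ' y)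
    (hρ'irr : ∀ U : Submodule ℂ W', (∀ x : V × ZMod p, ∀ w ∈ U, ρ' x w ∈ U) → U = ⊥ ∨ U = ⊤)
    (hρ'cent : ∀ a : ZMod p, ρ' ((0 : V), a) = ψ a • LinearMap.id) :
    Module.finrank ℂ W = p ^ n ∧
    ∃ T : W ≃ₗ[ℂ] W', ∀ (x : V × ZMod p) (w : W), T (ρ x w) = ρ' x (T w) := by
  have hf : f.IsAlt := halt
  have h2 : IsUnit (2 : ZMod p) := (Ring.two_ne_zero (by rwa [ZMod.ringChar_zmod_n])).isUnit
  have hsep : f.SeparatingLeft := fun v hv =>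
    not_not.1 fun h => (hnd v h).elim fun w hw => hw (hv w)
  obtain ⟨hψ0, hψadd⟩ := map_zero_eq_one_and_map_add_of_center hρone hρmul hρcent
  let χ : AddChar (ZMod p) ℂ := ⟨ψ, hψ0, hψadd⟩
  have hχ : Function.Injective χ := AddChar.injective_iff.2 fun a =>
    ((AddChar.IsPrimitive.of_ne_one (AddChar.ne_one_iff.2 hψnt)).zmod_char_eq_one_iff p a).1
  have : Finite V := Module.finite_of_finite (ZMod p)
  obtain ⟨L, hL⟩ := hf.exists_orthogonalBilin_eq_self
  obtain ⟨M, hLM⟩ := L.exists_isCompl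
  have hρχ : IsHeisenbergRep f χ ρ := ⟨hρmul, hρcent⟩
  have hρ'χ : IsHeisenbergRep f χ ρ' := ⟨hρ'mul, hρ'cent⟩
  obtain ⟨b, hb⟩ :=
    hρχ.exists_basis_apply_eq_smul_schrodingerPhase hf h2 hχ hsep hρirr hL hLM.symm
  obtain ⟨b', hb'⟩ :=
    hρ'χ.exists_basis_apply_eq_smul_schrodingerPhase hf h2 hχ hsep hρ'irr hL hLM.symm
  refine ⟨?_, b.equiv b' (.refl M),
    fun x => b.equiv_refl_map_eq_of_apply_eq_smul b' (hb x) (hb' x)⟩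
  have hLdim := (hf.isRefl.nondegenerate_iff_separatingLeft.2 hsep
    ).two_mul_finrank_eq_of_orthogonalBilin_eq_self hL
  have hMdim := finrank_add_eq_of_isCompl hLM
  rw [finrank_eq_nat_card_basis b, Module.natCard_eq_pow_finrank (K := ZMod p), Nat.card_zmod]
  congr 1
  omega

/-- Stone–von Neumann: let `(V,⟨·,·⟩)` be a nondegenerate symplectic
`𝔽_p`-vector space of dimension `2n`, `p` odd. Every irreducible complex representation
of the Heisenberg group `V^♯` whose restriction to the center `{0} × 𝔽_p` is a
nontrivial character has dimension `pⁿ`, and two such with the same central character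
are isomorphic. -/
theorem stone_von_neumann (p : ℕ) [Fact p.Prime] (hodd : p ≠ 2) (n : ℕ)
    (V : Type*) [AddCommGroup V] [Module (ZMod p) V] [FiniteDimensional (ZMod p) V]
    (f : V →ₗ[ZMod p] V →ₗ[ZMod p] ZMod p)
    (halt : ∀ v : V, f v v = 0)
    (hnd : ∀ v : V, v ≠ 0 → ∃ w : V, f v w ≠ 0)
    (hdim : Module.finrank (ZMod p) V = 2 * n)
    -- a representation `ρ` of `V^♯` on `W`:
    (W : Type*) [AddCommGroup W] [Module ℂ W] [FiniteDimensional ℂ W] [Nontrivial W]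
    (ρ : V × ZMod p → (W →ₗ[ℂ] W))
    (hρone : ρ ((0 : V), (0 : ZMod p)) = LinearMap.id)
    (hρmul : ∀ x y : V × ZMod p, ρ (heisMul f x y) = ρ x ∘ₗ ρ y)
    -- `ρ` is irreducible:
    (hρirr : ∀ U : Submodule ℂ W, (∀ x : V × ZMod p, ∀ w ∈ U, ρ x w ∈ U) → U = ⊥ ∨ U = ⊤)
    -- the center acts by a nontrivial character `ψ`:
    (ψ : ZMod p → ℂ)
    (hρcent : ∀ a : ZMod p, ρ ((0 : V), a) = ψ a • LinearMap.id)
    (hψnt : ∃ a : ZMod p, ψ a ≠ 1)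
    -- a second representation `ρ'` of `V^♯` on `W'` with the same properties and the
    -- same central character `ψ`:
    (W' : Type*) [AddCommGroup W'] [Module ℂ W'] [FiniteDimensional ℂ W'] [Nontrivial W']
    (ρ' : V × ZMod p → (W' →ₗ[ℂ] W'))
    (hρ'one : ρ' ((0 : V), (0 : ZMod p)) = LinearMap.id)
    (hρ'mul : ∀ x y : V × ZMod p, ρ' (heisMul f x y) = ρ' x ∘ₗ ρ' y)
    (hρ'irr : ∀ U : Submodule ℂ W', (∀ x : V × ZMod p, ∀ w ∈ U, ρ' x w ∈ U) → U = ⊥ ∨ U = ⊤)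
    (hρ'cent : ∀ a : ZMod p, ρ' ((0 : V), a) = ψ a • LinearMap.id) :
    Module.finrank ℂ W = p ^ n ∧
    ∃ T : W ≃ₗ[ℂ] W', ∀ (x : V × ZMod p) (w : W), T (ρ x w) = ρ' x (T w) :=
  stone_von_neumann_general p hodd n V f halt hnd hdim W ρ hρone hρmul hρirr ψ hρcent hψnt W' ρ'
    hρ'mul hρ'irr hρ'cent
end

section
/- Let p be an odd prime and (V,⟨·,·⟩) a nondegenerate symplectic 𝔽_p-vector space with a decomposition V = V⁺ ⊕ V⁻ into two Lagrangian subspaces with dim V⁺ = dim V⁻ ≥ 2. Let M be the group of symplectic automorphisms of V preserving both V⁺ and V⁻, acting on the Heisenberg group V^♯ by m·(v,a) = (mv,a), and let H = M ⋉ (V⁺ × 𝔽_p) inside M ⋉ V^♯. Let λ : H → ℂˣ be the character λ(m ⋉ (w,a)) = det(m|_{V⁺})^((p-1)/2) · φ(a), where φ is a nontrivial character of 𝔽_p and det(m|_{V⁺})^((p-1)/2) ∈ {±1} is viewed in ℂˣ. Then the induced representation Ind_H^{M ⋉ V^♯} λ contains no nonzero M-fixed vector. -/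
/-- Multiplication in the semidirect product `GL(V) ⋉ V^♯`, where a linear automorphism
`m` acts on the Heisenberg group `V^♯` by `m·(v,a) = (mv,a)`:
`(m,x)(m',x') = (m ∘ m', x · (m·x'))`. -/
def sdMul {p : ℕ} {V : Type*} [AddCommGroup V] [Module (ZMod p) V]
    (f : V →ₗ[ZMod p] V →ₗ[ZMod p] ZMod p)
    (g h : (V ≃ₗ[ZMod p] V) × (V × ZMod p)) : (V ≃ₗ[ZMod p] V) × (V × ZMod p) :=
  (h.1.trans g.1, heisMul f g.2 (g.1 h.2.1, h.2.2))

/-!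
Choose `m ∈ M` fixing a given `u ∈ V⁻` with `det (m|_{V⁺})` a non-square, so that `λ(m) = -1`.
Such an `m` acts on `V⁺` by an automorphism of non-square determinant preserving the functional
`⟨u, ·⟩` (possible as `dim V⁺ ≥ 2`), and on `V⁻ ≅ (V⁺)^*` by its contragredient.
Since `m` commutes with `(1, (u, 0))`, `M`-invariance and `H`-equivariance give
`F (1, (u, 0)) = -F (1, (u, 0))`. As every element of `M ⋉ V^♯` lies in
`H · (1, (u, 0)) · M` for some `u ∈ V⁻`, `F` vanishes.
-/

open Module

section Complement

variable {R V : Type*} [Ring R] [AddCommGroup V] [Module R V] {P Q : Submodule R V}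

noncomputable def LinearEquiv.ofIsCompl (h : IsCompl P Q) (A : P ≃ₗ[R] P) (B : Q ≃ₗ[R] Q) :
    V ≃ₗ[R] V :=
  (P.prodEquivOfIsCompl Q h).symm.trans ((A.prodCongr B).trans (P.prodEquivOfIsCompl Q h))

@[simp]
lemma LinearEquiv.ofIsCompl_apply_left (h : IsCompl P Q) (A : P ≃ₗ[R] P) (B : Q ≃ₗ[R] Q)
    (x : P) : LinearEquiv.ofIsCompl h A B x = A x := by
  simp [LinearEquiv.ofIsCompl]

@[simp]
lemma LinearEquiv.ofIsCompl_apply_right (h : IsCompl P Q) (A : P ≃ₗ[R] P) (B : Q ≃ₗ[R] Q)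
    (y : Q) : LinearEquiv.ofIsCompl h A B y = B y := by
  simp [LinearEquiv.ofIsCompl]

end Complement

lemma LinearEquiv.det_ofIsCompl {K V : Type*} [Field K] [AddCommGroup V] [Module K V]
    [FiniteDimensional K V] {P Q : Submodule K V} (h : IsCompl P Q) (A : P ≃ₗ[K] P)
    (B : Q ≃ₗ[K] Q) :
    LinearMap.det (LinearEquiv.ofIsCompl h A B : V →ₗ[K] V) =
      LinearMap.det (A : P →ₗ[K] P) * LinearMap.det (B : Q →ₗ[K] Q) := by
  rw [← LinearMap.det_prodMap, ← LinearMap.det_conj _ (P.prodEquivOfIsCompl Q h)]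
  rfl

lemma exists_linearEquiv_det_eq_forall_apply_eq {K W : Type*} [Field K] [AddCommGroup W]
    [Module K W] [FiniteDimensional K W] (hW : 2 ≤ finrank K W) (ℓ : Dual K W) {d : K}
    (hd : d ≠ 0) :
    ∃ A : W ≃ₗ[K] W, LinearMap.det (A : W →ₗ[K] W) = d ∧ ∀ x, ℓ (A x) = ℓ x := by
  have hker : LinearMap.ker ℓ ≠ ⊥ := fun h => by
    have := LinearMap.finrank_le_finrank_of_injective (LinearMap.ker_eq_bot.1 h)
    rw [finrank_self] at this
    omega
  obtain ⟨v, hvker, hv⟩ := Submodule.exists_mem_ne_zero_of_ne_bot hker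
  obtain ⟨C, hC⟩ := Submodule.exists_isCompl (K ∙ v)
  let A := LinearEquiv.ofIsCompl hC (LinearEquiv.smulOfNeZero K _ d hd) (LinearEquiv.refl K C)
  refine ⟨A, ?_, fun x => LinearMap.congr_fun (?_ : ℓ ∘ₗ (A : W →ₗ[K] W) = ℓ) x⟩
  · have hsmul : (LinearEquiv.smulOfNeZero K (K ∙ v) d hd : (K ∙ v) →ₗ[K] (K ∙ v)) =
        d • LinearMap.id := rfl
    rw [LinearEquiv.det_ofIsCompl, hsmul, LinearMap.det_smul, finrank_span_singleton hv]
    simp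
  · refine LinearMap.ext_on_codisjoint hC.codisjoint (fun x hx => ?_) (fun x hx => ?_)
    · lift x to K ∙ v using hx
      have hxker : (x : W) ∈ LinearMap.ker ℓ :=
        (Submodule.span_singleton_le_iff_mem _ _).2 hvker x.2
      simp [A, LinearMap.mem_ker.1 hxker, map_smul]
    · lift x to C using hx
      simp [A]

section Lagrangian

variable {K V : Type*} [Field K] [AddCommGroup V] [Module K V] {f : V →ₗ[K] V →ₗ[K] K}
  {P Q : Submodule K V}

lemma eq_zero_of_mem_of_forall_apply_eq_zero (hcompl : IsCompl P Q)
    (hPlag : ∀ v : V, (∀ w ∈ P, f v w = 0) → v ∈ P) {q : V} (hq : q ∈ Q)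
    (h : ∀ x ∈ P, f q x = 0) : q = 0 :=
  Submodule.disjoint_def.1 hcompl.disjoint q (hPlag q h) hq

lemma exists_contragredient [FiniteDimensional K V] (hcompl : IsCompl P Q)
    (hPlag : ∀ v : V, (∀ w ∈ P, f v w = 0) → v ∈ P) (hdim : finrank K P = finrank K Q)
    (A : P ≃ₗ[K] P) : ∃ B : Q ≃ₗ[K] Q, ∀ (y : Q) (x : P), f (B y) (A x) = f y x := by
  let pairing : Q →ₗ[K] Dual K P := f.compl₁₂ Q.subtype P.subtype
  have hinj : Function.Injective pairing := by
    rw [← LinearMap.ker_eq_bot, Submodule.eq_bot_iff]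
    intro y hy
    exact Subtype.ext <| eq_zero_of_mem_of_forall_apply_eq_zero hcompl hPlag y.2
      fun x hx => LinearMap.congr_fun hy ⟨x, hx⟩
  let e := pairing.linearEquivOfInjective hinj (by rw [Subspace.dual_finrank_eq, hdim])
  refine ⟨e.trans (A.symm.dualMap.trans e.symm), fun y x => ?_⟩
  change e (e.symm (A.symm.dualMap (e y))) (A x) = e y x
  rw [e.apply_symm_apply, LinearEquiv.dualMap_apply, A.symm_apply_apply]

lemma exists_symplectic_fixing_det_restrict_eq [FiniteDimensional K V] (halt : f.IsAlt)
    (hcompl : IsCompl P Q) (hPiso : ∀ x ∈ P, ∀ y ∈ P, f x y = 0)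
    (hQiso : ∀ x ∈ Q, ∀ y ∈ Q, f x y = 0) (hPlag : ∀ v : V, (∀ w ∈ P, f v w = 0) → v ∈ P)
    (hdim : finrank K P = finrank K Q) (hdim2 : 2 ≤ finrank K P) {c : K} (hc : c ≠ 0)
    {u : V} (hu : u ∈ Q) :
    ∃ m : V ≃ₗ[K] V, (∀ v w, f (m v) (m w) = f v w) ∧ ∃ hmP : ∀ x ∈ P, m x ∈ P,
      (∀ y ∈ Q, m y ∈ Q) ∧ m u = u ∧ LinearMap.det (m.toLinearMap.restrict hmP) = c := by
  obtain ⟨A, hAdet, hAu⟩ :=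
    exists_linearEquiv_det_eq_forall_apply_eq hdim2 ((f u).domRestrict P) hc
  obtain ⟨B, hB⟩ := exists_contragredient hcompl hPlag hdim A
  let m := LinearEquiv.ofIsCompl hcompl A B
  have hmP : ∀ x ∈ P, m x ∈ P := fun x hx => by
    lift x to P using hx
    simp [m]
  have hsymp : f.compl₁₂ (m : V →ₗ[K] V) m = f := by
    refine LinearMap.ext_on_codisjoint hcompl.codisjoint (fun x hx => ?_) (fun y hy => ?_) <;>
      refine LinearMap.ext_on_codisjoint hcompl.codisjoint (fun x' hx' => ?_) (fun y' hy' => ?_)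
    · lift x to P using hx; lift x' to P using hx'
      simp [m, hPiso _ (A x).2 _ (A x').2, hPiso _ x.2 _ x'.2]
    · lift x to P using hx; lift y' to Q using hy'
      simp [m, ← halt.neg (B y'), hB, halt.neg]
    · lift y to Q using hy; lift x' to P using hx'
      simp [m, hB]
    · lift y to Q using hy; lift y' to Q using hy'
      simp [m, hQiso _ (B y).2 _ (B y').2, hQiso _ y.2 _ y'.2]
  refine ⟨m, fun v w => LinearMap.congr_fun₂ hsymp v w, hmP, fun y hy => ?_, ?_, ?_⟩
  · lift y to Q using hy
    simp [m]
  · -- `B u - u` pairs trivially with `P = A P`, because `A` preserves `⟨u, ·⟩` on `P`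
    have hBu : (B ⟨u, hu⟩ : V) - u = 0 := by
      refine eq_zero_of_mem_of_forall_apply_eq_zero hcompl hPlag (Q.sub_mem (B _).2 hu)
        fun x hx => ?_
      lift x to P using hx
      obtain ⟨x, rfl⟩ := A.surjective x
      simpa [hB, sub_eq_zero] using (hAu x).symm
    exact (LinearEquiv.ofIsCompl_apply_right hcompl A B ⟨u, hu⟩).trans (sub_eq_zero.1 hBu)
  · have hres : m.toLinearMap.restrict hmP = A := by
      ext x
      simp [m]
    rw [hres, hAdet]

end Lagrangian

lemma ZMod.exists_ne_zero_pow_half_ne_one {p : ℕ} [Fact p.Prime] (hp : p ≠ 2) :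
    ∃ c : ZMod p, c ≠ 0 ∧ c ^ ((p - 1) / 2) ≠ 1 := by
  obtain ⟨c, hc⟩ := FiniteField.exists_nonsquare (F := ZMod p) (by rwa [ZMod.ringChar_zmod_n])
  have hc0 : c ≠ 0 := by
    rintro rfl
    exact hc IsSquare.zero
  have hhalf : (p - 1) / 2 = p / 2 := by
    have := Nat.odd_iff.1 ((Fact.out : p.Prime).odd_of_ne_two hp)
    omega
  exact ⟨c, hc0, hhalf ▸ mt (ZMod.euler_criterion p hc0).2 hc⟩

theorem no_M_fixed_vector_general (p : ℕ) [Fact p.Prime] (hodd : p ≠ 2)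
    (V : Type*) [AddCommGroup V] [Module (ZMod p) V] [FiniteDimensional (ZMod p) V]
    (f : V →ₗ[ZMod p] V →ₗ[ZMod p] ZMod p)
    (halt : ∀ v : V, f v v = 0)
    (P Q : Submodule (ZMod p) V) (hcompl : IsCompl P Q)
    (hPiso : ∀ x ∈ P, ∀ y ∈ P, f x y = 0)
    (hQiso : ∀ x ∈ Q, ∀ y ∈ Q, f x y = 0)
    (hPlag : ∀ v : V, (∀ w ∈ P, f v w = 0) → v ∈ P)
    (hdim : Module.finrank (ZMod p) P = Module.finrank (ZMod p) Q)
    (hdim2 : 2 ≤ Module.finrank (ZMod p) P)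
    -- `φ` is a nontrivial character of `𝔽_p`:
    (φ : ZMod p → ℂ)
    -- `F` lies in the induced representation `Ind_H^{M ⋉ V^♯} λ`:
    (F : (V ≃ₗ[ZMod p] V) × (V × ZMod p) → ℂ)
    (hFind : ∀ (m : V ≃ₗ[ZMod p] V),
      (∀ v w : V, f (m v) (m w) = f v w) →
      ∀ (hmP : ∀ x ∈ P, m x ∈ P), (∀ x ∈ Q, m x ∈ Q) →
      ∀ w ∈ P, ∀ (a : ZMod p) (g : (V ≃ₗ[ZMod p] V) × (V × ZMod p)),
        F (sdMul f (m, (w, a)) g)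
          = (if LinearMap.det (m.toLinearMap.restrict hmP) ^ ((p - 1) / 2) = 1
              then (1 : ℂ) else -1) * φ a * F g)
    -- `F` is fixed by `M`:
    (hFfix : ∀ (m : V ≃ₗ[ZMod p] V),
      (∀ v w : V, f (m v) (m w) = f v w) →
      (∀ x ∈ P, m x ∈ P) → (∀ x ∈ Q, m x ∈ Q) →
      ∀ g : (V ≃ₗ[ZMod p] V) × (V × ZMod p),
        F (sdMul f g (m, ((0 : V), (0 : ZMod p)))) = F g) :
    -- then `F` vanishes on `M ⋉ V^♯`:
    ∀ g : (V ≃ₗ[ZMod p] V) × (V × ZMod p),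
      (∀ v w : V, f (g.1 v) (g.1 w) = f v w) →
      (∀ x ∈ P, g.1 x ∈ P) → (∀ x ∈ Q, g.1 x ∈ Q) →
      F g = 0 := by
  have hF_H : ∀ w ∈ P, ∀ (a : ZMod p) g,
      F (sdMul f (LinearEquiv.refl _ V, (w, a)) g) = φ a * F g := fun w hw a g => by
    have hdet : LinearMap.det (LinearMap.id.restrict fun x (hx : x ∈ P) => hx) = 1 :=
      LinearMap.det_id
    simpa [hdet] using
      hFind (LinearEquiv.refl _ V) (fun _ _ => rfl) (fun _ h => h) (fun _ h => h) w hw a g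
  have hF_Q : ∀ u ∈ Q, F (LinearEquiv.refl _ V, (u, 0)) = 0 := by
    intro u hu
    obtain ⟨c, hc0, hc⟩ := ZMod.exists_ne_zero_pow_half_ne_one hodd
    obtain ⟨m, hmsymp, hmP, hmQ, hmu, hmdet⟩ :=
      exists_symplectic_fixing_det_restrict_eq halt hcompl hPiso hQiso hPlag hdim hdim2 hc0 hu
    have hind := hFind m hmsymp hmP hmQ 0 P.zero_mem 0 (LinearEquiv.refl _ V, (u, 0))
    have hfix := hFfix m hmsymp hmP hmQ (LinearEquiv.refl _ V, (u, 0))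
    have hone := hF_H 0 P.zero_mem 0 (LinearEquiv.refl _ V, (u, 0))
    simp only [hmdet, if_neg hc] at hind
    simp only [sdMul, heisMul, LinearEquiv.refl_trans, LinearEquiv.trans_refl,
      LinearEquiv.refl_apply, hmu, map_zero, LinearMap.zero_apply, zero_add, add_zero, mul_zero,
      neg_mul, one_mul] at hind hfix hone
    linear_combination (hind - hfix + hone) / 2
  intro g hgsymp hgP hgQ
  obtain ⟨w, hw, u, hu, hwu⟩ :=
    Submodule.mem_sup.1 (hcompl.sup_eq_top ▸ Submodule.mem_top : g.2.1 ∈ P ⊔ Q)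
  have hg : g = sdMul f (LinearEquiv.refl _ V, (w, g.2.2 - (2 : ZMod p)⁻¹ * f w u))
      (sdMul f (LinearEquiv.refl _ V, (u, 0)) (g.1, (0, 0))) := by
    ext <;> simp [sdMul, heisMul, hwu]
  rw [hg, hF_H w hw, hFfix g.1 hgsymp hgP hgQ, hF_Q u hu, mul_zero]

/-- let `V = V⁺ ⊕ V⁻` be a nondegenerate symplectic `𝔽_p`-vector space
with both summands Lagrangian of dimension `≥ 2`, `M` the group of symplectic
automorphisms preserving `V⁺` and `V⁻` (acting on `V^♯` by `m·(v,a) = (mv,a)`),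
`H = M ⋉ (V⁺ × 𝔽_p)` and `λ(m ⋉ (w,a)) = det(m|_{V⁺})^((p-1)/2) · φ(a)` with `φ` a
nontrivial character of `𝔽_p`. Then `Ind_H^{M ⋉ V^♯} λ` has no nonzero `M`-fixed
vector. -/
theorem no_M_fixed_vector (p : ℕ) [Fact p.Prime] (hodd : p ≠ 2)
    (V : Type*) [AddCommGroup V] [Module (ZMod p) V] [FiniteDimensional (ZMod p) V]
    (f : V →ₗ[ZMod p] V →ₗ[ZMod p] ZMod p)
    (halt : ∀ v : V, f v v = 0)
    (hnd : ∀ v : V, v ≠ 0 → ∃ w : V, f v w ≠ 0)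
    (P Q : Submodule (ZMod p) V) (hcompl : IsCompl P Q)
    (hPiso : ∀ x ∈ P, ∀ y ∈ P, f x y = 0)
    (hQiso : ∀ x ∈ Q, ∀ y ∈ Q, f x y = 0)
    (hPlag : ∀ v : V, (∀ w ∈ P, f v w = 0) → v ∈ P)
    (hQlag : ∀ v : V, (∀ w ∈ Q, f v w = 0) → v ∈ Q)
    (hdim : Module.finrank (ZMod p) P = Module.finrank (ZMod p) Q)
    (hdim2 : 2 ≤ Module.finrank (ZMod p) P)
    -- `φ` is a nontrivial character of `𝔽_p`:
    (φ : ZMod p → ℂ)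
    (hφmul : ∀ a b : ZMod p, φ (a + b) = φ a * φ b)
    (hφnt : ∃ a : ZMod p, φ a ≠ 1)
    -- `F` lies in the induced representation `Ind_H^{M ⋉ V^♯} λ`:
    (F : (V ≃ₗ[ZMod p] V) × (V × ZMod p) → ℂ)
    (hFind : ∀ (m : V ≃ₗ[ZMod p] V),
      (∀ v w : V, f (m v) (m w) = f v w) →
      ∀ (hmP : ∀ x ∈ P, m x ∈ P), (∀ x ∈ Q, m x ∈ Q) →
      ∀ w ∈ P, ∀ (a : ZMod p) (g : (V ≃ₗ[ZMod p] V) × (V × ZMod p)),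
        F (sdMul f (m, (w, a)) g)
          = (if LinearMap.det (m.toLinearMap.restrict hmP) ^ ((p - 1) / 2) = 1
              then (1 : ℂ) else -1) * φ a * F g)
    -- `F` is fixed by `M`:
    (hFfix : ∀ (m : V ≃ₗ[ZMod p] V),
      (∀ v w : V, f (m v) (m w) = f v w) →
      (∀ x ∈ P, m x ∈ P) → (∀ x ∈ Q, m x ∈ Q) →
      ∀ g : (V ≃ₗ[ZMod p] V) × (V × ZMod p),
        F (sdMul f g (m, ((0 : V), (0 : ZMod p)))) = F g) :
    -- then `F` vanishes on `M ⋉ V^♯`: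
    ∀ g : (V ≃ₗ[ZMod p] V) × (V × ZMod p),
      (∀ v w : V, f (g.1 v) (g.1 w) = f v w) →
      (∀ x ∈ P, g.1 x ∈ P) → (∀ x ∈ Q, g.1 x ∈ Q) →
      F g = 0 :=
  no_M_fixed_vector_general p hodd V f halt P Q hcompl hPiso hQiso hPlag hdim hdim2 φ F hFind hFfix
end
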